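/- For every integer n ≥ 2, the recursion D_n = n·(D_{n−1} + (−1)^{n−1}) holds, as an identity in the integers. -/

import Mathlib

/-- The arrangement (one-line notation) of `σ` avoids all patterns
`12, 23, …, (n-1)n`: digit `i` (encoded as the value `i-1` in `Fin n`)
is never immediately followed by digit `i+1`. -/
def avoidsSucc (n : ℕ) (σ : Equiv.Perm (Fin n)) : Prop :=
  ∀ (k : ℕ) (h : k + 1 < n),
    (σ ⟨k + 1, h⟩).val ≠ (σ ⟨k, Nat.lt_of_succ_lt h⟩).val + 1

/-- The arrangement of `σ` contains the pattern `n1`: digit `n` (value `n-1`)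
is immediately followed by digit `1` (value `0`). -/
def containsN1 (n : ℕ) (σ : Equiv.Perm (Fin n)) : Prop :=
  ∃ (k : ℕ) (h : k + 1 < n),
    (σ ⟨k, Nat.lt_of_succ_lt h⟩).val = n - 1 ∧ (σ ⟨k + 1, h⟩).val = 0

/-- `dCount n` = number of arrangements of `{1,…,n}` avoiding `12, 23, …, (n-1)n`. -/
noncomputable def dCount (n : ℕ) : ℕ :=
  Nat.card {σ : Equiv.Perm (Fin n) // avoidsSucc n σ}

/-- `DCount n` = number of arrangements of `{1,…,n}` avoiding `12, 23, …, (n-1)n, n1`. -/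
noncomputable def DCount (n : ℕ) : ℕ :=
  Nat.card {σ : Equiv.Perm (Fin n) // avoidsSucc n σ ∧ ¬ containsN1 n σ}

/-!
Read an arrangement through its position map `π` and call `w` a succession of `π` when `w + 1`
(mod `n`) stands right after `w`; `D_n` counts the arrangements without successions. For a proper
subset `S` of the residues, exactly `(n - #S)!` arrangements have all successions in `S`: pick
`v ∈ S` with `v + 1 ∉ S` and delete the value `v + 1`, which is glued to `v`; this leaves `n - 1`
values and `#S - 1` prescribed successions. Inclusion–exclusion then gives
`D_n = ∑_{k < n} (-1)^k C(n, k) (n - k)! = n · d_{n-1}` with `d` the derangement numbers, and the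
recursion `d_{n-1} = (n - 1) d_{n-2} + (-1)^(n-1)` turns into the claim.
-/

open Equiv Finset
open scoped Nat

namespace Fin

variable {n : ℕ}

lemma val_succAbove (p : Fin (n + 1)) (i : Fin n) :
    (p.succAbove i).val = if i.val < p.val then i.val else i.val + 1 := by
  unfold succAbove
  split_ifs <;> simp_all [lt_def]

lemma succAbove_add_one {u : Fin (n + 2)} {x : Fin (n + 1)} (h : u.succAbove x + 1 ≠ u) :
    u.succAbove (x + 1) = u.succAbove x + 1 := by
  simp only [Ne, Fin.ext_iff, val_add_one, val_succAbove, val_last] at h ⊢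
  have := x.isLt; have := u.isLt
  split_ifs at h ⊢ <;> omega

lemma succAbove_val_add_one_eq_iff {t : Fin (n + 1)} {a b : Fin n} (h : a.val + 1 ≠ t.val) :
    (t.succAbove a).val + 1 = (t.succAbove b).val ↔ a.val + 1 = b.val := by
  simp only [val_succAbove]
  split_ifs <;> omega

lemma eq_add_one_iff {a b : Fin (n + 1)} :
    b = a + 1 ↔ b.val = a.val + 1 ∨ (a.val = n ∧ b.val = 0) := by
  rw [Fin.ext_iff, val_add_one]
  have := b.isLt
  split_ifs with h <;> simp only [Fin.ext_iff, val_last] at h <;> omega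

lemma exists_mem_add_one_notMem {S : Finset (Fin (n + 1))} (hne : S.Nonempty) (hS : S ≠ univ) :
    ∃ x ∈ S, x + 1 ∉ S := by
  by_contra! hclosed
  obtain ⟨x₀, hx₀⟩ := hne
  have hall : ∀ k : Fin (n + 1), x₀ + k ∈ S := by
    refine Fin.induction (by simpa using hx₀) fun k hk => ?_
    rw [← Fin.coeSucc_eq_succ, ← add_assoc]
    exact hclosed _ hk
  exact hS (eq_univ_of_forall fun y => by simpa using hall (y - x₀))

end Fin

namespace Equiv.Perm

variable {n : ℕ}

def extendAt (a b : Fin (n + 1)) (τ : Perm (Fin n)) : Perm (Fin (n + 1)) :=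
  (finSuccEquiv' a).trans (τ.optionCongr.trans (finSuccEquiv' b).symm)

def restrictAt (π : Perm (Fin (n + 1))) (a : Fin (n + 1)) : Perm (Fin n) :=
  (finSuccAboveEquiv a).trans <|
    (π.subtypeEquiv (p := (· ≠ a)) (q := (· ≠ π a)) fun _ => π.injective.ne_iff.symm).trans
      (finSuccAboveEquiv (π a)).symm

@[simp] lemma extendAt_apply_self (a b : Fin (n + 1)) (τ : Perm (Fin n)) :
    extendAt a b τ a = b := by
  simp [extendAt]

@[simp] lemma extendAt_apply_succAbove (a b : Fin (n + 1)) (τ : Perm (Fin n)) (x : Fin n) :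
    extendAt a b τ (a.succAbove x) = b.succAbove (τ x) := by
  simp [extendAt]

lemma succAbove_restrictAt_apply (π : Perm (Fin (n + 1))) (a : Fin (n + 1)) (x : Fin n) :
    (π a).succAbove (restrictAt π a x) = π (a.succAbove x) :=
  congrArg Subtype.val ((finSuccAboveEquiv (π a)).apply_symm_apply _)

lemma extendAt_restrictAt (π : Perm (Fin (n + 1))) (a : Fin (n + 1)) :
    extendAt a (π a) (restrictAt π a) = π := by
  ext1 i
  rcases Fin.eq_self_or_eq_succAbove a i with rfl | ⟨x, rfl⟩
  · simp
  · rw [extendAt_apply_succAbove, succAbove_restrictAt_apply]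

lemma restrictAt_extendAt (a b : Fin (n + 1)) (τ : Perm (Fin n)) :
    restrictAt (extendAt a b τ) a = τ := by
  ext1 x
  simpa using succAbove_restrictAt_apply (extendAt a b τ) a x

end Equiv.Perm


section Consecutive

variable {n : ℕ}

/-- `π` is the position map of an arrangement (the value `w` stands at place `π w`), so this says
that `w + 1`, taken cyclically, stands right after `w`. -/
def Consecutive (π : Perm (Fin (n + 1))) (w : Fin (n + 1)) : Prop :=
  (π w).val + 1 = (π (w + 1)).val

instance (π : Perm (Fin (n + 1))) : DecidablePred (Consecutive π) :=
  fun _ => inferInstanceAs (Decidable (_ = _))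

def withConsecutive (S : Finset (Fin (n + 1))) : Finset (Perm (Fin (n + 1))) :=
  {π | ∀ w ∈ S, Consecutive π w}

lemma consecutive_inv_iff (σ : Perm (Fin (n + 1))) (w : Fin (n + 1)) :
    Consecutive σ⁻¹ w ↔
      ∃ (k : ℕ) (h : k + 1 < n + 1), σ ⟨k, Nat.lt_of_succ_lt h⟩ = w ∧ σ ⟨k + 1, h⟩ = w + 1 := by
  constructor
  · intro hw
    refine ⟨(σ⁻¹ w).val, hw ▸ (σ⁻¹ (w + 1)).isLt, by simp, ?_⟩
    rw [show (⟨_, _⟩ : Fin (n + 1)) = σ⁻¹ (w + 1) from Fin.ext hw]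
    simp
  · rintro ⟨k, h, rfl, hk⟩
    simp [Consecutive, ← hk]

@[simp] lemma mem_withConsecutive {S : Finset (Fin (n + 1))} {π : Perm (Fin (n + 1))} :
    π ∈ withConsecutive S ↔ ∀ w ∈ S, Consecutive π w := by
  simp [withConsecutive]

lemma withConsecutive_empty : withConsecutive (∅ : Finset (Fin (n + 1))) = univ := by
  simp [withConsecutive]

lemma withConsecutive_univ : withConsecutive (univ : Finset (Fin (n + 1))) = ∅ := by
  refine eq_empty_of_forall_notMem fun π hπ => ?_
  have h := mem_withConsecutive.1 hπ (π.symm (Fin.last n)) (mem_univ _)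
  have := (π (π.symm (Fin.last n) + 1)).isLt
  rw [Consecutive, π.apply_symm_apply, Fin.val_last] at h
  omega

lemma restrictAt_apply_val_add_one {π : Perm (Fin (n + 2))} {u : Fin (n + 2)} {v : Fin (n + 1)}
    (hvu : u.succAbove v + 1 = u) (hv : Consecutive π (u.succAbove v)) :
    (π.restrictAt u v).val + 1 = (π u).val := by
  rw [Consecutive, hvu, ← Perm.succAbove_restrictAt_apply, Fin.val_succAbove] at hv
  split_ifs at hv <;> omega

lemma consecutive_succAbove_iff {π : Perm (Fin (n + 2))} {u : Fin (n + 2)} {v w : Fin (n + 1)}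
    (hvu : u.succAbove v + 1 = u) (hv : Consecutive π (u.succAbove v)) (hwv : w ≠ v) :
    Consecutive π (u.succAbove w) ↔ Consecutive (π.restrictAt u) w := by
  have hw : u.succAbove w + 1 ≠ u := fun h =>
    hwv (Fin.succAbove_right_injective (add_right_cancel (h.trans hvu.symm)))
  unfold Consecutive
  rw [← Fin.succAbove_add_one hw, ← Perm.succAbove_restrictAt_apply,
    ← Perm.succAbove_restrictAt_apply]
  refine Fin.succAbove_val_add_one_eq_iff fun h => hwv ((π.restrictAt u).injective ?_)
  exact Fin.ext (by have := restrictAt_apply_val_add_one hvu hv; omega)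

lemma consecutive_extendAt (u : Fin (n + 2)) {v : Fin (n + 1)} (hvu : u.succAbove v + 1 = u)
    (τ : Perm (Fin (n + 1))) : Consecutive (Perm.extendAt u (τ v).succ τ) (u.succAbove v) := by
  simp [Consecutive, hvu]

/-- The bijection deletes the value `u`, which is glued to its predecessor `v`. -/
lemma card_withConsecutive_eq_of_succ_notMem (S : Finset (Fin (n + 2))) {u : Fin (n + 2)}
    {v : Fin (n + 1)} (hvu : u.succAbove v + 1 = u) (hv : u.succAbove v ∈ S) (hu : u ∉ S) :
    #(withConsecutive S) = #(withConsecutive ((S.erase (u.succAbove v)).preimage u.succAbove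
      Fin.succAbove_right_injective.injOn)) := by
  refine card_nbij' (Perm.restrictAt · u) (fun τ => Perm.extendAt u (τ v).succ τ)
    (fun π hπ => ?_) (fun τ hτ => ?_) (fun π hπ => ?_) (fun τ _ => Perm.restrictAt_extendAt _ _ τ)
  · simp only [mem_coe, mem_withConsecutive, mem_preimage, mem_erase] at hπ ⊢
    rintro w ⟨hwv, hw⟩
    exact (consecutive_succAbove_iff hvu (hπ _ hv) (ne_of_apply_ne _ hwv)).1 (hπ _ hw)
  · simp only [mem_coe, mem_withConsecutive, mem_preimage, mem_erase] at hτ ⊢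
    have hv' := consecutive_extendAt u hvu τ
    intro w hw
    obtain ⟨w, rfl⟩ := Fin.exists_succAbove_eq (ne_of_mem_of_not_mem hw hu)
    obtain rfl | hwv := eq_or_ne w v
    · exact hv'
    · rw [consecutive_succAbove_iff hvu hv' hwv, Perm.restrictAt_extendAt]
      exact hτ w ⟨Fin.succAbove_right_injective.ne hwv, hw⟩
  · simp only [mem_coe, mem_withConsecutive] at hπ
    dsimp only
    rw [show ((π.restrictAt u) v).succ = π u from
      Fin.ext (restrictAt_apply_val_add_one hvu (hπ _ hv)), Perm.extendAt_restrictAt]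

lemma card_withConsecutive_of_ne_univ {S : Finset (Fin (n + 1))} (hS : S ≠ univ) :
    #(withConsecutive S) = (n + 1 - #S)! := by
  induction n with
  | zero =>
    obtain rfl : S = ∅ := card_eq_zero.1 (by simpa using (card_lt_iff_ne_univ S).2 hS)
    simp [withConsecutive_empty]
  | succ m ih =>
    obtain rfl | hne := S.eq_empty_or_nonempty
    · simp [withConsecutive_empty, Fintype.card_perm]
    obtain ⟨x, hx, hx1⟩ := Fin.exists_mem_add_one_notMem hne hS
    obtain ⟨v, hv⟩ := Fin.exists_succAbove_eq (ne_of_mem_of_not_mem hx hx1)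
    have hvu : (x + 1).succAbove v + 1 = x + 1 := by rw [hv]
    rw [← hv] at hx
    have hS' : #((S.erase ((x + 1).succAbove v)).preimage (x + 1).succAbove
      Fin.succAbove_right_injective.injOn) = #S - 1 := by
      rw [card_preimage, filter_true_of_mem, card_erase_of_mem hx]
      exact fun y hy =>
        Fin.exists_succAbove_eq_iff.2 (ne_of_mem_of_not_mem (mem_of_mem_erase hy) hx1)
    have hlt := (card_lt_iff_ne_univ S).2 hS
    rw [Fintype.card_fin] at hlt
    rw [card_withConsecutive_eq_of_succ_notMem S hvu hx hx1, ih, hS']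
    · congr 1
      have := hne.card_pos
      omega
    · rw [← card_lt_iff_ne_univ, hS', Fintype.card_fin]
      omega

lemma card_withConsecutive (S : Finset (Fin (n + 1))) :
    #(withConsecutive S) = if #S = n + 1 then 0 else (n + 1 - #S)! := by
  split_ifs with h
  · rw [eq_univ_of_card S (by simpa using h), withConsecutive_univ, card_empty]
  · exact card_withConsecutive_of_ne_univ (by rwa [Ne, ← card_eq_iff_eq_univ, Fintype.card_fin])

lemma card_forall_not_consecutive :
    (#{π : Perm (Fin (n + 1)) | ∀ w, ¬ Consecutive π w} : ℤ) =
      ∑ k ∈ range (n + 1), (-1 : ℤ) ^ k * (((n + 1).choose k * (n + 1 - k)! : ℕ) : ℤ) := by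
  have h := inclusion_exclusion_card_inf_compl univ fun w : Fin (n + 1) => withConsecutive {w}
  have hinf (t : Finset (Fin (n + 1))) :
      t.inf (fun w => withConsecutive {w}) = withConsecutive t := by
    ext π; simp [mem_inf]
  have hcompl : (univ.inf fun w : Fin (n + 1) => (withConsecutive {w})ᶜ) =
      ({π | ∀ w, ¬ Consecutive π w} : Finset (Perm (Fin (n + 1)))) := by
    ext π; simp [mem_inf]
  simp only [hinf, hcompl, card_withConsecutive] at h
  rw [h, sum_powerset_apply_card
      (fun k => (-1 : ℤ) ^ k * ((if k = n + 1 then 0 else (n + 1 - k)! : ℕ) : ℤ)),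
    card_univ, Fintype.card_fin, sum_range_succ, if_pos rfl, Nat.cast_zero, mul_zero, smul_zero,
    add_zero]
  refine sum_congr rfl fun k hk => ?_
  rw [if_neg (mem_range.1 hk).ne, nsmul_eq_mul]
  push_cast
  ring

end Consecutive

lemma choose_mul_factorial_eq_mul_ascFactorial {n k : ℕ} (hk : k ≤ n) :
    (n + 1).choose k * (n + 1 - k)! = (n + 1) * (k + 1).ascFactorial (n - k) := by
  refine Nat.eq_of_mul_eq_mul_left k.factorial_pos ?_
  calc k ! * ((n + 1).choose k * (n + 1 - k)!)
      = (n + 1).choose k * k ! * (n + 1 - k)! := by ring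
    _ = (n + 1) * (k ! * (k + 1).ascFactorial (n - k)) := by
      rw [Nat.choose_mul_factorial_mul_factorial (by omega), Nat.factorial_mul_ascFactorial,
        Nat.add_sub_cancel' hk, Nat.factorial_succ]
    _ = k ! * ((n + 1) * (k + 1).ascFactorial (n - k)) := by ring

lemma avoidsSucc_and_not_containsN1_iff {n : ℕ} (σ : Perm (Fin (n + 1))) :
    avoidsSucc (n + 1) σ ∧ ¬ containsN1 (n + 1) σ ↔ ∀ w, ¬ Consecutive σ⁻¹ w := by
  have : (∀ w, ¬ Consecutive σ⁻¹ w) ↔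
      ∀ k (h : k + 1 < n + 1), σ ⟨k + 1, h⟩ ≠ σ ⟨k, Nat.lt_of_succ_lt h⟩ + 1 := by
    simp only [consecutive_inv_iff, not_exists, not_and]
    exact ⟨fun H k h => H _ k h rfl, fun H w k h hw => hw ▸ H k h⟩
  rw [this]
  simp [avoidsSucc, containsN1, Fin.eq_add_one_iff, not_or, forall_and]

theorem DCount_succ (n : ℕ) : DCount (n + 1) = (n + 1) * numDerangements n := by
  have hcard : DCount (n + 1) = #{π : Perm (Fin (n + 1)) | ∀ w, ¬ Consecutive π w} := by
    rw [DCount, Nat.card_congr ((Equiv.inv _).subtypeEquiv (q := fun π => ∀ w, ¬ Consecutive π w)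
      avoidsSucc_and_not_containsN1_iff),
      Nat.card_eq_fintype_card, Fintype.card_subtype]
  zify
  rw [hcard, card_forall_not_consecutive, numDerangements_sum, mul_sum]
  refine sum_congr rfl fun k hk => ?_
  rw [choose_mul_factorial_eq_mul_ascFactorial (Nat.lt_succ_iff.1 (mem_range.1 hk))]
  push_cast
  ring

theorem stmt_7 (n : ℕ) (hn : 2 ≤ n) :
    (DCount n : ℤ) = (n : ℤ) * ((DCount (n - 1) : ℤ) + (-1 : ℤ) ^ (n - 1)) := by
  obtain ⟨n, rfl⟩ := Nat.exists_eq_add_of_le' hn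
  rw [show n + 2 - 1 = n + 1 by omega, DCount_succ, DCount_succ]
  push_cast
  rw [numDerangements_succ]
  ring
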